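/- arXiv:1801.01561 — 5 statements merged into one kernel-verified Lean document; each statement's English description precedes it below -/
import Mathlib

section
/- Let M be a von Neumann algebra on a complex Hilbert space H. The following conditions are equivalent: (a) M is commutative; (b) there exists an antiunitary operator J on H such that J A J⁻¹ = A* for every A ∈ M; (c) there exists an antiunitary operator J on H such that J A = A J for every selfadjoint A ∈ M; (d) there exists an antiunitary operator J on H such that J A = A J for every positive invertible A ∈ M. -/
/-!
If `M` is commutative, take by Zorn's lemma a maximal "conjugation graph": a set of pairs
`(x, J x)` on which `J` is conjugate-linear, isometric, involutive and satisfies `J A = A* J`.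
It is closed, so its domain is a closed subspace; a nonzero vector `ξ` orthogonal to the domain
could be adjoined through the pairs `(A ξ, A* ξ)`, which are isometric because `A* A = A A*`.
Hence the graph is that of an antiunitary `J` with `J A J⁻¹ = A*`.

Conversely, `J A J⁻¹ = A*` makes `A ↦ A*` multiplicative on `M`, which forces commutativity. If `J`
only commutes with selfadjoint elements, writing `A = Re A + i Im A` gives `J A J⁻¹ = A*` again,
and `A + ‖A‖ + 1` is positive invertible for every selfadjoint `A`.
-/

open scoped ComplexOrder InnerProductSpace ComplexStarModule ComplexConjugate Pointwise
open ContinuousLinearMap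

namespace StarSubalgebra

variable {A : Type*} [Ring A] [StarRing A] [Algebra ℂ A] [StarModule ℂ A] (S : StarSubalgebra ℂ A)

theorem realPart_mem {a : A} (ha : a ∈ S) : (ℜ a : A) ∈ S := by
  rw [realPart_apply_coe, ← algebraMap_smul ℂ]
  exact S.smul_mem (add_mem ha (star_mem ha)) _

theorem imaginaryPart_mem {a : A} (ha : a ∈ S) : (ℑ a : A) ∈ S := by
  rw [imaginaryPart_apply_coe, ← algebraMap_smul ℂ]
  exact S.smul_mem (S.smul_mem (sub_mem ha (star_mem ha)) _) _

theorem algebraMap_real_mem (r : ℝ) : algebraMap ℝ A r ∈ S := by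
  rw [IsScalarTower.algebraMap_apply ℝ ℂ]
  exact S.algebraMap_mem _

end StarSubalgebra

theorem star_eq_realPart_sub_I_smul_imaginaryPart {A : Type*} [AddCommGroup A] [Module ℂ A]
    [StarAddMonoid A] [StarModule ℂ A] (a : A) : star a = ℜ a - Complex.I • ℑ a := by
  conv_lhs => rw [← realPart_add_I_smul_imaginaryPart a]
  rw [star_add, star_smul, (ℜ a).prop.star_eq, (ℑ a).prop.star_eq, Complex.star_def,
    Complex.conj_I, neg_smul, sub_eq_add_neg]

section Hilbert

variable {H : Type*} [NormedAddCommGroup H] [InnerProductSpace ℂ H] [CompleteSpace H]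

theorem StarSubalgebra.adjoint_mem (S : StarSubalgebra ℂ (H →L[ℂ] H)) {A : H →L[ℂ] H}
    (hA : A ∈ S) : adjoint A ∈ S := by
  simpa [star_eq_adjoint] using star_mem hA

theorem isSelfAdjoint_of_inner_nonneg {A : H →L[ℂ] H} (hA : ∀ x, 0 ≤ ⟪A x, x⟫_ℂ) :
    IsSelfAdjoint A :=
  isSelfAdjoint_iff_isSymmetric.mpr <| (LinearMap.isSymmetric_iff_inner_map_self_real _).mpr
    fun x => (IsSelfAdjoint.of_nonneg (hA x)).star_eq

variable (S : StarSubalgebra ℂ (H →L[ℂ] H))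

/-- The graph of a partially defined antiunitary involution `J` with `J A = A† J` for `A ∈ S`. -/
structure IsConjGraph (Γ : Set (H × H)) : Prop where
  zero_mem : (0 : H × H) ∈ Γ
  add_mem ⦃p q : H × H⦄ : p ∈ Γ → q ∈ Γ → p + q ∈ Γ
  smul_mem (c : ℂ) ⦃p : H × H⦄ : p ∈ Γ → (c • p.1, conj c • p.2) ∈ Γ
  swap_mem ⦃p : H × H⦄ : p ∈ Γ → p.swap ∈ Γ
  inner_snd ⦃p q : H × H⦄ : p ∈ Γ → q ∈ Γ → ⟪p.2, q.2⟫_ℂ = conj ⟪p.1, q.1⟫_ℂ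
  map_mem ⦃A : H →L[ℂ] H⦄ (hA : A ∈ S) ⦃p : H × H⦄ : p ∈ Γ → (A p.1, adjoint A p.2) ∈ Γ

def cyclicConjGraph (ξ : H) : Set (H × H) :=
  (fun A : H →L[ℂ] H => (A ξ, adjoint A ξ)) '' (S : Set (H →L[ℂ] H))

theorem isConjGraph_cyclicConjGraph (hS : ∀ A ∈ S, ∀ B ∈ S, A * B = B * A) (ξ : H) :
    IsConjGraph S (cyclicConjGraph S ξ) := by
  refine ⟨⟨0, zero_mem S, by simp⟩, ?_, ?_, ?_, ?_, ?_⟩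
  · rintro _ _ ⟨A, hA, rfl⟩ ⟨B, hB, rfl⟩
    exact ⟨A + B, add_mem hA hB, by simp⟩
  · rintro c _ ⟨A, hA, rfl⟩
    exact ⟨c • A, S.smul_mem hA c, by simp [← star_eq_adjoint, star_smul]⟩
  · rintro _ ⟨A, hA, rfl⟩
    exact ⟨adjoint A, S.adjoint_mem hA, by simp⟩
  · rintro _ _ ⟨A, hA, rfl⟩ ⟨B, hB, rfl⟩
    calc ⟪adjoint A ξ, adjoint B ξ⟫_ℂ = ⟪ξ, A (adjoint B ξ)⟫_ℂ := adjoint_inner_left _ _ _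
      _ = ⟪ξ, adjoint B (A ξ)⟫_ℂ := by
        rw [← mul_apply_eq_comp, hS A hA _ (S.adjoint_mem hB), mul_apply_eq_comp]
      _ = ⟪B ξ, A ξ⟫_ℂ := adjoint_inner_right _ _ _
      _ = conj ⟪A ξ, B ξ⟫_ℂ := (inner_conj_symm _ _).symm
  · rintro B hB _ ⟨A, hA, rfl⟩
    refine ⟨B * A, mul_mem hB hA, ?_⟩
    simp only [← star_eq_adjoint, star_mul, hS _ (star_mem hA) _ (star_mem hB)]
    rfl

namespace IsConjGraph

variable {S} {Γ : Set (H × H)}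

theorem singleton_zero : IsConjGraph S {0} := by
  constructor <;> simp_all

theorem norm_snd (h : IsConjGraph S Γ) {p : H × H} (hp : p ∈ Γ) : ‖p.2‖ = ‖p.1‖ := by
  rw [@norm_eq_sqrt_re_inner ℂ, @norm_eq_sqrt_re_inner ℂ, h.inner_snd hp hp, RCLike.conj_re]

theorem sub_mem (h : IsConjGraph S Γ) {p q : H × H} (hp : p ∈ Γ) (hq : q ∈ Γ) : p - q ∈ Γ := by
  have := h.add_mem hp (h.smul_mem (-1) hq)
  simp only [neg_one_smul, map_neg, map_one] at this
  rw [sub_eq_add_neg]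
  exact this

theorem snd_eq_of_mem (h : IsConjGraph S Γ) {x y y' : H} (hy : (x, y) ∈ Γ) (hy' : (x, y') ∈ Γ) :
    y = y' := by
  simpa [sub_eq_zero] using h.norm_snd (h.sub_mem hy hy')

theorem isometry_fst (h : IsConjGraph S Γ) : Isometry fun p : Γ => (p : H × H).1 := by
  refine Isometry.of_dist_eq fun p q => ?_
  have := h.norm_snd (h.sub_mem p.2 q.2)
  rw [Subtype.dist_eq, Prod.dist_eq, dist_eq_norm, dist_eq_norm (p : H × H).2]
  simp only [Prod.snd_sub, Prod.fst_sub] at this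
  rw [this, max_self]

theorem isClosed_image_fst (h : IsConjGraph S Γ) (hΓ : IsClosed Γ) : IsClosed (Prod.fst '' Γ) := by
  have : CompleteSpace Γ := hΓ.completeSpace_coe
  rw [Set.image_eq_range]
  exact h.isometry_fst.isUniformInducing.isComplete_range.isClosed

theorem sUnion {c : Set (Set (H × H))} (hc : IsChain (· ⊆ ·) c) (hne : c.Nonempty)
    (h : ∀ Γ ∈ c, IsConjGraph S Γ) : IsConjGraph S (⋃₀ c) := by
  have pair : ∀ {p q}, p ∈ ⋃₀ c → q ∈ ⋃₀ c → ∃ Γ ∈ c, p ∈ Γ ∧ q ∈ Γ := by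
    rintro p q ⟨Γ₁, h₁, hp⟩ ⟨Γ₂, h₂, hq⟩
    rcases hc.total h₁ h₂ with h12 | h21
    exacts [⟨Γ₂, h₂, h12 hp, hq⟩, ⟨Γ₁, h₁, hp, h21 hq⟩]
  obtain ⟨Γ₀, h₀⟩ := hne
  refine ⟨⟨Γ₀, h₀, (h Γ₀ h₀).zero_mem⟩, fun p q hp hq => ?_,
    fun c' p ⟨Γ, hΓ, hp⟩ => ⟨Γ, hΓ, (h Γ hΓ).smul_mem c' hp⟩,
    fun p ⟨Γ, hΓ, hp⟩ => ⟨Γ, hΓ, (h Γ hΓ).swap_mem hp⟩, fun p q hp hq => ?_,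
    fun A hA p ⟨Γ, hΓ, hp⟩ => ⟨Γ, hΓ, (h Γ hΓ).map_mem hA hp⟩⟩
  · obtain ⟨Γ, hΓ, hp, hq⟩ := pair hp hq
    exact ⟨Γ, hΓ, (h Γ hΓ).add_mem hp hq⟩
  · obtain ⟨Γ, hΓ, hp, hq⟩ := pair hp hq
    exact (h Γ hΓ).inner_snd hp hq

theorem closure (h : IsConjGraph S Γ) : IsConjGraph S (closure Γ) := by
  refine ⟨subset_closure h.zero_mem,
    fun p q hp hq => map_mem_closure₂ continuous_add hp hq fun _ ha _ hb => h.add_mem ha hb,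
    fun c p hp => map_mem_closure (f := fun q : H × H => (c • q.1, conj c • q.2)) (by fun_prop) hp
      fun _ hr => h.smul_mem c hr,
    fun p hp => map_mem_closure continuous_swap hp fun _ hr => h.swap_mem hr, fun p q hp hq => ?_,
    fun A hA p hp => map_mem_closure (f := fun q : H × H => (A q.1, adjoint A q.2)) (by fun_prop) hp
      fun _ hr => h.map_mem hA hr⟩
  have hclosed : IsClosed {r : (H × H) × (H × H) | ⟪r.1.2, r.2.2⟫_ℂ = conj ⟪r.1.1, r.2.1⟫_ℂ} :=
    isClosed_eq (by fun_prop) (Complex.continuous_conj.comp (by fun_prop))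
  have hpq : (p, q) ∈ _root_.closure (Γ ×ˢ Γ) := by
    rw [closure_prod_eq]
    exact ⟨hp, hq⟩
  exact closure_minimal (fun r (hr : r ∈ Γ ×ˢ Γ) => h.inner_snd hr.1 hr.2) hclosed hpq

theorem add_of_orthogonal {Γ₁ Γ₂ : Set (H × H)} (h₁ : IsConjGraph S Γ₁) (h₂ : IsConjGraph S Γ₂)
    (horth : ∀ ⦃p q : H × H⦄, p ∈ Γ₁ → q ∈ Γ₂ → ⟪p.1, q.1⟫_ℂ = 0) :
    IsConjGraph S (Γ₁ + Γ₂) := by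
  have horth₂ : ∀ ⦃p q : H × H⦄, p ∈ Γ₁ → q ∈ Γ₂ → ⟪p.2, q.2⟫_ℂ = 0 :=
    fun p q hp hq => horth (h₁.swap_mem hp) (h₂.swap_mem hq)
  refine ⟨by simpa using Set.add_mem_add h₁.zero_mem h₂.zero_mem, ?_, ?_, ?_, ?_, ?_⟩
  · rintro _ _ ⟨p, hp, q, hq, rfl⟩ ⟨p', hp', q', hq', rfl⟩
    rw [add_add_add_comm]
    exact Set.add_mem_add (h₁.add_mem hp hp') (h₂.add_mem hq hq')
  · rintro c _ ⟨p, hp, q, hq, rfl⟩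
    convert Set.add_mem_add (h₁.smul_mem c hp) (h₂.smul_mem c hq) using 1
    simp [smul_add]
  · rintro _ ⟨p, hp, q, hq, rfl⟩
    exact Set.add_mem_add (h₁.swap_mem hp) (h₂.swap_mem hq)
  · rintro _ _ ⟨p, hp, q, hq, rfl⟩ ⟨p', hp', q', hq', rfl⟩
    simp only [Prod.fst_add, Prod.snd_add, inner_add_left, inner_add_right, map_add,
      h₁.inner_snd hp hp', h₂.inner_snd hq hq', horth hp hq', horth₂ hp hq',
      inner_eq_zero_symm.mp (horth hp' hq), inner_eq_zero_symm.mp (horth₂ hp' hq), map_zero]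
  · rintro A hA _ ⟨p, hp, q, hq, rfl⟩
    convert Set.add_mem_add (h₁.map_mem hA hp) (h₂.map_mem hA hq) using 1
    simp

def domain (h : IsConjGraph S Γ) : Submodule ℂ H where
  carrier := Prod.fst '' Γ
  add_mem' := by
    rintro _ _ ⟨p, hp, rfl⟩ ⟨q, hq, rfl⟩
    exact ⟨p + q, h.add_mem hp hq, rfl⟩
  zero_mem' := ⟨0, h.zero_mem, rfl⟩
  smul_mem' := by
    rintro c _ ⟨p, hp, rfl⟩
    exact ⟨_, h.smul_mem c hp, rfl⟩

theorem domain_eq_top_of_maximal (hS : ∀ A ∈ S, ∀ B ∈ S, A * B = B * A)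
    (hΓ : Maximal (IsConjGraph S) Γ) : hΓ.prop.domain = ⊤ := by
  have h := hΓ.prop
  have hclosed : IsClosed Γ := closure_subset_iff_isClosed.mp (hΓ.2 h.closure subset_closure)
  have : CompleteSpace h.domain := (h.isClosed_image_fst hclosed).completeSpace_coe
  rw [← Submodule.orthogonal_eq_bot_iff, Submodule.eq_bot_iff]
  intro ξ hξ
  have hξΓ : ∀ p ∈ Γ, ⟪p.1, ξ⟫_ℂ = 0 :=
    fun p hp => (Submodule.mem_orthogonal _ _).mp hξ _ ⟨p, hp, rfl⟩
  have horth : ∀ ⦃p q : H × H⦄, p ∈ Γ → q ∈ cyclicConjGraph S ξ → ⟪p.1, q.1⟫_ℂ = 0 := by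
    rintro p _ hp ⟨A, hA, rfl⟩
    rw [← adjoint_inner_left]
    exact hξΓ _ (h.map_mem (S.adjoint_mem hA) hp)
  have hext := h.add_of_orthogonal (isConjGraph_cyclicConjGraph S hS ξ) horth
  have hle : Γ ⊆ Γ + cyclicConjGraph S ξ :=
    fun p hp => ⟨p, hp, 0, ⟨0, S.zero_mem, by simp⟩, add_zero p⟩
  have hξξ : (ξ, ξ) ∈ Γ :=
    hΓ.2 hext hle ⟨0, h.zero_mem, (ξ, ξ), ⟨1, S.one_mem, by simp [← star_eq_adjoint]⟩, zero_add _⟩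
  exact inner_self_eq_zero.mp (hξΓ _ hξξ)

theorem exists_linearIsometryEquiv (h : IsConjGraph S Γ) (htot : ∀ x, ∃ y, (x, y) ∈ Γ) :
    ∃ J : H ≃ₗᵢ⋆[ℂ] H, ∀ x, (x, J x) ∈ Γ := by
  choose f hf using htot
  have hf_eq : ∀ {x y}, (x, y) ∈ Γ → f x = y := fun hy => h.snd_eq_of_mem (hf _) hy
  have hff : ∀ x, f (f x) = x := fun x => hf_eq (h.swap_mem (hf x))
  let J : H ≃ₛₗ[starRingEnd ℂ] H :=
    { toFun := f
      map_add' := fun x y => hf_eq (h.add_mem (hf x) (hf y))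
      map_smul' := fun c x => hf_eq (h.smul_mem c (hf x))
      invFun := f
      left_inv := hff
      right_inv := hff }
  exact ⟨⟨J, fun x => h.norm_snd (hf x)⟩, hf⟩

end IsConjGraph

theorem exists_linearIsometryEquiv_apply_eq_adjoint_apply
    (hS : ∀ A ∈ S, ∀ B ∈ S, A * B = B * A) :
    ∃ J : H ≃ₗᵢ⋆[ℂ] H, ∀ A ∈ S, ∀ x, J (A x) = adjoint A (J x) := by
  obtain ⟨Γ, -, hΓ⟩ := zorn_subset_nonempty {Γ | IsConjGraph S Γ}
    (fun c hc hchain hne => ⟨⋃₀ c, IsConjGraph.sUnion hchain hne hc,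
      fun _ => Set.subset_sUnion_of_mem⟩) {0} IsConjGraph.singleton_zero
  have h : IsConjGraph S Γ := hΓ.prop
  have htot : ∀ x, ∃ y, (x, y) ∈ Γ := fun x => by
    obtain ⟨p, hp, rfl⟩ : x ∈ h.domain :=
      IsConjGraph.domain_eq_top_of_maximal hS hΓ ▸ Submodule.mem_top
    exact ⟨p.2, hp⟩
  obtain ⟨J, hJ⟩ := h.exists_linearIsometryEquiv htot
  exact ⟨J, fun A hA x => h.snd_eq_of_mem (hJ (A x)) (h.map_mem hA (hJ x))⟩

theorem commute_of_apply_eq_adjoint_apply {J : H → H} (hJ : Function.Surjective J)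
    (hJS : ∀ A ∈ S, ∀ x, J (A x) = adjoint A (J x)) : ∀ A ∈ S, ∀ B ∈ S, A * B = B * A := by
  have star_mul_eq : ∀ A ∈ S, ∀ B ∈ S, star (A * B) = star A * star B := by
    intro A hA B hB
    ext y
    obtain ⟨x, rfl⟩ := hJ y
    simp only [star_eq_adjoint, mul_apply_eq_comp]
    rw [← hJS _ (mul_mem hA hB), mul_apply_eq_comp, hJS _ hA, hJS _ hB]
  intro A hA B hB
  simpa using star_mul_eq _ (star_mem hB) _ (star_mem hA)

section Conjugation

variable {F : Type*} [FunLike F H H] [SemilinearMapClass F (starRingEnd ℂ) H H] (J : F)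

theorem apply_eq_adjoint_apply_of_commute_selfAdjoint
    (hJ : ∀ A ∈ S, IsSelfAdjoint A → ∀ x, J (A x) = A (J x)) :
    ∀ A ∈ S, ∀ x, J (A x) = adjoint A (J x) := by
  intro A hA x
  conv_lhs => rw [← realPart_add_I_smul_imaginaryPart A]
  rw [← star_eq_adjoint, star_eq_realPart_sub_I_smul_imaginaryPart]
  simp only [add_apply, neg_apply, smul_apply, map_add, map_smulₛₗ, Complex.conj_I,
    neg_smul, sub_eq_add_neg, hJ _ (S.realPart_mem hA) (ℜ A).prop,
    hJ _ (S.imaginaryPart_mem hA) (ℑ A).prop]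

theorem commute_selfAdjoint_of_commute_isStrictlyPositive
    (hJ : ∀ A ∈ S, (∀ x, 0 ≤ ⟪A x, x⟫_ℂ) → IsUnit A → ∀ x, J (A x) = A (J x)) :
    ∀ A ∈ S, IsSelfAdjoint A → ∀ x, J (A x) = A (J x) := by
  intro A hA hsa x
  set B := A + algebraMap ℝ _ ‖A‖ + 1
  have hB : IsStrictlyPositive B :=
    isStrictlyPositive_one.nonneg_add (neg_le_iff_add_nonneg.mp hsa.neg_algebraMap_norm_le_self)
  have hBS : B ∈ S := add_mem (add_mem hA (S.algebraMap_real_mem _)) S.one_mem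
  have := hJ B hBS ((nonneg_iff_isPositive B).mp hB.nonneg).inner_nonneg_left hB.isUnit x
  simpa [B, Algebra.algebraMap_eq_smul_one, ← Complex.coe_smul, map_smulₛₗ] using this

end Conjugation

end Hilbert

/-- **Lemma (equivalence of commutativity criteria via antiunitary operators).**
Let `M` be a von Neumann algebra on a complex Hilbert space `H`. The following are
equivalent: (a) `M` is commutative; (b) there is an antiunitary `J` on `H` (a bijective
conjugate-linear isometry, modeled as `H ≃ₗᵢ⋆[ℂ] H`) with `J A J⁻¹ = A*` for `A ∈ M`;
(c) there is an antiunitary `J` commuting with every selfadjoint element of `M`;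
(d) there is an antiunitary `J` commuting with every positive invertible element of `M`. -/
theorem vonNeumann_commutative_iff_antiunitary
    {H : Type*} [NormedAddCommGroup H] [InnerProductSpace ℂ H] [CompleteSpace H]
    (M : VonNeumannAlgebra H) :
    ((∀ A ∈ M, ∀ B ∈ M, A * B = B * A) ↔
      (∃ J : H ≃ₗᵢ⋆[ℂ] H, ∀ A ∈ M, ∀ x : H,
        J (A (J.symm x)) = ContinuousLinearMap.adjoint A x)) ∧
    ((∀ A ∈ M, ∀ B ∈ M, A * B = B * A) ↔
      (∃ J : H ≃ₗᵢ⋆[ℂ] H, ∀ A ∈ M, IsSelfAdjoint A → ∀ x : H, J (A x) = A (J x))) ∧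
    ((∀ A ∈ M, ∀ B ∈ M, A * B = B * A) ↔
      (∃ J : H ≃ₗᵢ⋆[ℂ] H, ∀ A ∈ M,
        (∀ x : H, 0 ≤ (inner ℂ (A x) x : ℂ)) → IsUnit A →
        ∀ x : H, J (A x) = A (J x))) := by
  have of_intertwines (J : H ≃ₗᵢ⋆[ℂ] H) (hJ : ∀ A ∈ M, ∀ x, J (A x) = adjoint A (J x)) :
      ∀ A ∈ M, ∀ B ∈ M, A * B = B * A :=
    commute_of_apply_eq_adjoint_apply M.toStarSubalgebra J.surjective hJ
  have of_selfAdjoint (J : H ≃ₗᵢ⋆[ℂ] H)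
      (hJ : ∀ A ∈ M, IsSelfAdjoint A → ∀ x, J (A x) = A (J x)) :
      ∀ A ∈ M, ∀ B ∈ M, A * B = B * A :=
    of_intertwines J (apply_eq_adjoint_apply_of_commute_selfAdjoint M.toStarSubalgebra J hJ)
  refine ⟨⟨fun hM => ?_, fun ⟨J, hJ⟩ => of_intertwines J fun A hA x => by
      simpa using hJ A hA (J x)⟩,
    ⟨fun hM => ?_, fun ⟨J, hJ⟩ => of_selfAdjoint J hJ⟩,
    ⟨fun hM => ?_, fun ⟨J, hJ⟩ => of_selfAdjoint J
      (commute_selfAdjoint_of_commute_isStrictlyPositive M.toStarSubalgebra J hJ)⟩⟩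
  all_goals
    obtain ⟨J, hJ⟩ := exists_linearIsometryEquiv_apply_eq_adjoint_apply M.toStarSubalgebra hM
  · exact ⟨J, fun A hA x => by rw [hJ A hA, J.apply_symm_apply]⟩
  · exact ⟨J, fun A hA hsa x => by rw [hJ A hA, ← star_eq_adjoint, hsa.star_eq]⟩
  · exact ⟨J, fun A hA hpos _ x => by
      rw [hJ A hA, ← star_eq_adjoint, (isSelfAdjoint_of_inner_nonneg hpos).star_eq]⟩
end

section
/- Let M be a commutative von Neumann algebra on a complex Hilbert space H. Then there exists an antiunitary operator J on H such that J A J⁻¹ = A* for every A ∈ M (equivalently, J commutes with every selfadjoint element of M). -/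
/-!
By Zorn's lemma choose a maximal set `S` of vectors whose cyclic subspaces `M x` are pairwise
orthogonal; maximality makes the vectors `A x` (`A ∈ M`, `x ∈ S`) total in `H`.
Commutativity of `M` gives `⟪A* x, B* y⟫ = conj ⟪A x, B y⟫`, so `A x ↦ A* x` extends to an
antiunitary `J`, and then `J A J⁻¹ (B x) = J (A B* x) = B A* x = A* B x`.
-/

open scoped ComplexConjugate InnerProductSpace

theorem Set.exists_maximal_pairwise {α : Type*} (r : α → α → Prop) :
    ∃ s : Set α, Maximal (fun s => s.Pairwise r) s :=
  zorn_subset {s | s.Pairwise r} fun _ hc hchain =>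
    ⟨_, hchain.pairwise_sUnion.mpr hc, fun _ => Set.subset_sUnion_of_mem⟩

section Antiunitary

variable {H : Type*} [NormedAddCommGroup H] [InnerProductSpace ℂ H]
  {ι : Type*} (g : ι → H) (σ : ι ≃ ι)

-- `Finsupp.lcongr σ (starLinearEquiv ℂ)` sends `single i c` to `single (σ i) (conj c)`.
theorem inner_linearCombination_lcongr_star
    (hg : ∀ i j, ⟪g (σ i), g (σ j)⟫_ℂ = conj ⟪g i, g j⟫_ℂ) (l m : ι →₀ ℂ) :
    ⟪Finsupp.linearCombination ℂ g (Finsupp.lcongr σ (starLinearEquiv ℂ) l),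
      Finsupp.linearCombination ℂ g (Finsupp.lcongr σ (starLinearEquiv ℂ) m)⟫_ℂ =
      conj ⟪Finsupp.linearCombination ℂ g l, Finsupp.linearCombination ℂ g m⟫_ℂ := by
  induction l using Finsupp.induction_linear with
  | zero => simp
  | add l₁ l₂ h₁ h₂ => simp only [map_add, inner_add_left, h₁, h₂]
  | single i c =>
    induction m using Finsupp.induction_linear with
    | zero => simp
    | add m₁ m₂ h₁ h₂ => simp only [map_add, inner_add_right, h₁, h₂]
    | single j d =>
      simp only [Finsupp.lcongr_single, Finsupp.linearCombination_single, starLinearEquiv_apply,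
        inner_smul_left, inner_smul_right, hg, map_mul, RCLike.star_def, Complex.conj_conj]

theorem norm_linearCombination_lcongr_star
    (hg : ∀ i j, ⟪g (σ i), g (σ j)⟫_ℂ = conj ⟪g i, g j⟫_ℂ) (l : ι →₀ ℂ) :
    ‖Finsupp.linearCombination ℂ g (Finsupp.lcongr σ (starLinearEquiv ℂ) l)‖ =
      ‖Finsupp.linearCombination ℂ g l‖ := by
  have h := inner_linearCombination_lcongr_star g σ hg l l
  rw [inner_self_eq_norm_sq_to_K, inner_self_eq_norm_sq_to_K, map_pow, RCLike.conj_ofReal] at h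
  exact (pow_left_inj₀ (norm_nonneg _) (norm_nonneg _) two_ne_zero).mp (mod_cast h)

theorem exists_antiunitary_apply_eq_of_inner_eq_conj [CompleteSpace H]
    (hg : ∀ i j, ⟪g (σ i), g (σ j)⟫_ℂ = conj ⟪g i, g j⟫_ℂ)
    (hdense : Dense (Submodule.span ℂ (Set.range g) : Set H)) :
    ∃ J : H ≃ₗᵢ⋆[ℂ] H, ∀ i, J (g i) = g (σ i) := by
  have hrange : DenseRange (Finsupp.linearCombination ℂ g) := by
    rwa [DenseRange, ← LinearMap.coe_range, Finsupp.range_linearCombination]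
  let T : (ι →₀ ℂ) ≃ₗ⋆[ℂ] (ι →₀ ℂ) := Finsupp.lcongr σ (starLinearEquiv ℂ)
  have hT := norm_linearCombination_lcongr_star g σ hg
  refine ⟨T.extendOfIsometry _ _ hrange hrange hT, fun i => ?_⟩
  simpa [T] using LinearEquiv.extendOfIsometry_eq T _ _ hrange hrange hT (Finsupp.single i 1)

end Antiunitary

namespace StarSubalgebra

variable {H : Type*} [NormedAddCommGroup H] [InnerProductSpace ℂ H] [CompleteSpace H]
  (M : StarSubalgebra ℂ (H →L[ℂ] H))

-- As `M` is closed under `star`, this relation is symmetric: it says that `M x ⟂ M y`.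
def OrthogonalToOrbit (x y : H) : Prop := ∀ A ∈ M, ⟪x, A y⟫_ℂ = 0

variable {M}

theorem OrthogonalToOrbit.inner_apply_apply {x y : H} (h : M.OrthogonalToOrbit x y)
    {A B : H →L[ℂ] H} (hA : A ∈ M) (hB : B ∈ M) : ⟪A x, B y⟫_ℂ = 0 := by
  rw [← ContinuousLinearMap.adjoint_inner_right, ← mul_apply_eq_comp,
    ← ContinuousLinearMap.star_eq_adjoint]
  exact h _ (mul_mem (star_mem hA) hB)

theorem inner_star_apply_star_apply (hM : ∀ A ∈ M, ∀ B ∈ M, A * B = B * A) {S : Set H}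
    (hS : S.Pairwise M.OrthogonalToOrbit) {A B : H →L[ℂ] H} (hA : A ∈ M) (hB : B ∈ M)
    {x y : H} (hx : x ∈ S) (hy : y ∈ S) :
    ⟪star A x, star B y⟫_ℂ = conj ⟪A x, B y⟫_ℂ := by
  rcases eq_or_ne x y with rfl | hxy
  · rw [ContinuousLinearMap.star_eq_adjoint, ContinuousLinearMap.adjoint_inner_left,
      ← mul_apply_eq_comp, hM A hA _ (star_mem hB), mul_apply_eq_comp,
      ContinuousLinearMap.star_eq_adjoint, ContinuousLinearMap.adjoint_inner_right,
      inner_conj_symm]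
  · rw [(hS hx hy hxy).inner_apply_apply hA hB,
      (hS hx hy hxy).inner_apply_apply (star_mem hA) (star_mem hB), map_zero]

theorem dense_span_orbits_of_maximal {S : Set H}
    (hS : Maximal (fun s => s.Pairwise M.OrthogonalToOrbit) S) :
    Dense (Submodule.span ℂ (Set.range fun p : M × S => p.1.1 p.2) : Set H) := by
  rw [Submodule.dense_iff_topologicalClosure_eq_top, Submodule.topologicalClosure_eq_top_iff,
    Submodule.eq_bot_iff]
  intro v hv
  have hperp : ∀ A ∈ M, ∀ y ∈ S, ⟪A y, v⟫_ℂ = 0 := by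
    intro A hA y hy
    refine Submodule.inner_right_of_mem_orthogonal ?_ hv
    exact Submodule.subset_span ⟨(⟨A, hA⟩, ⟨y, hy⟩), rfl⟩
  have hins : (insert v S).Pairwise M.OrthogonalToOrbit := by
    refine Set.pairwise_insert.mpr ⟨hS.1, fun y hy _ => ⟨fun A hA => ?_, fun A hA => ?_⟩⟩
    · rw [← inner_conj_symm, hperp A hA y hy, map_zero]
    · rw [← ContinuousLinearMap.adjoint_inner_left, ← ContinuousLinearMap.star_eq_adjoint,
        hperp _ (star_mem hA) y hy]
  have hvS : v ∈ S := hS.2 hins (Set.subset_insert v S) (Set.mem_insert v S)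
  simpa using hperp 1 (one_mem M) v hvS

end StarSubalgebra

/-- If `M` is a commutative von Neumann algebra on a complex Hilbert space `H`, then there
exists an antiunitary operator `J` on `H` (a bijective conjugate-linear isometry, modeled
as `H ≃ₗᵢ⋆[ℂ] H`) such that `J A J⁻¹ = A*` for every `A ∈ M`. -/
theorem exists_antiunitary_adjoint_of_vonNeumann_commutative
    {H : Type*} [NormedAddCommGroup H] [InnerProductSpace ℂ H] [CompleteSpace H]
    (M : VonNeumannAlgebra H) (hM : ∀ A ∈ M, ∀ B ∈ M, A * B = B * A) :
    ∃ J : H ≃ₗᵢ⋆[ℂ] H, ∀ A ∈ M, ∀ x : H,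
      J (A (J.symm x)) = ContinuousLinearMap.adjoint A x := by
  obtain ⟨S, hS⟩ := Set.exists_maximal_pairwise M.toStarSubalgebra.OrthogonalToOrbit
  have hdense := StarSubalgebra.dense_span_orbits_of_maximal hS
  obtain ⟨J, hJ⟩ := exists_antiunitary_apply_eq_of_inner_eq_conj
    (fun p : M.toStarSubalgebra × S => p.1.1 p.2)
    ((Function.Involutive.toPerm star star_involutive).prodCongr (Equiv.refl S))
    (fun p q => StarSubalgebra.inner_star_apply_star_apply hM hS.1 p.1.2 q.1.2 p.2.2 q.2.2)
    hdense
  have hJ_symm : ∀ B ∈ M, ∀ x ∈ S, J.symm (B x) = star B x := fun B hB x hx => by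
    rw [J.symm_apply_eq]
    simpa using (hJ (⟨star B, star_mem hB⟩, ⟨x, hx⟩)).symm
  refine ⟨J, fun A hA => ?_⟩
  have hconj :
      (J : H →SL[starRingEnd ℂ] H).comp (A.comp (J.symm : H →SL[starRingEnd ℂ] H)) =
        ContinuousLinearMap.adjoint A := by
    refine ContinuousLinearMap.ext_on hdense ?_
    rintro _ ⟨⟨⟨B, hB⟩, ⟨x, hx⟩⟩, rfl⟩
    have hJ_mul : J ((A * star B) x) = star (A * star B) x :=
      hJ (⟨A * star B, mul_mem hA (star_mem hB)⟩, ⟨x, hx⟩)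
    show J (A (J.symm (B x))) = _
    rw [hJ_symm B hB x hx, ← mul_apply_eq_comp, hJ_mul, star_mul, star_star,
      hM B hB _ (star_mem hA), mul_apply_eq_comp, ContinuousLinearMap.star_eq_adjoint]
  exact fun x => congr($hconj x)
end

section
/- Let M be a commutative von Neumann algebra on a complex Hilbert space H, let M' denote its commutant, and let (H_i)_{i∈I} be a family of pairwise orthogonal closed subspaces of H whose algebraic span is dense in H, such that each H_i is invariant under every operator in M' and such that, for each i, the only closed subspaces of H_i invariant under all operators of M' are {0} and H_i. Then for an antiunitary operator J on H the following are equivalent: (a) J commutes with every selfadjoint element of M; (b) J(H_i) ⊆ H_i for every i ∈ I. -/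
/-!
(a) ⇒ (b): `V i` is invariant under the selfadjoint set `M'`, so its orthogonal projection lies
in `M'' = M`, and `J` commutes with it.

(b) ⇒ (a): as `M` is commutative, a selfadjoint `A ∈ M` lies in `M'`, so it preserves `V i`, and
the commutant of its restriction `B` to `V i` contains the restrictions of `M'`, hence acts
irreducibly on `V i`. For `c : ℝ`, the operators `F = (B - c)⁺` and `G = (c - B)⁺` satisfy
`G F = 0` and commute with that commutant, so the closure of the range of `F` is `0` or `V i`;
hence `F = 0` or `G = 0`, i.e. the spectrum of `B` lies on one side of every `c`. Thus `A` acts on `V i` as a real scalar, which the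
conjugate-linear `J` commutes with, and density of the span of the `V i` finishes.
-/

section Dichotomy

variable {𝕜 E : Type*} [NontriviallyNormedField 𝕜] [NormedAddCommGroup E] [NormedSpace 𝕜 E]

def CommutantActsIrreducibly (B : E →L[𝕜] E) : Prop :=
  ∀ K : Submodule 𝕜 E, IsClosed (K : Set E) →
    (∀ T : E →L[𝕜] E, Commute T B → ∀ x ∈ K, T x ∈ K) → K = ⊥ ∨ K = ⊤

theorem Commute.apply_mem_topologicalClosure_range {T F : E →L[𝕜] E} (h : Commute T F) {x : E}
    (hx : x ∈ F.range.topologicalClosure) :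
    T x ∈ F.range.topologicalClosure := by
  have hrange : F.range.map (T : E →ₗ[𝕜] E) ≤ F.range := by
    rintro _ ⟨_, ⟨y, rfl⟩, rfl⟩
    exact ⟨T y, congr($h.eq.symm y)⟩
  exact Submodule.topologicalClosure_mono hrange
    (Submodule.topologicalClosure_map T _ ⟨x, hx, rfl⟩)

theorem CommutantActsIrreducibly.eq_zero_or_eq_zero {B F G : E →L[𝕜] E}
    (hB : CommutantActsIrreducibly B) (hF : ∀ T, Commute T B → Commute T F) (hGF : G * F = 0) :
    F = 0 ∨ G = 0 := by
  rcases hB _ (Submodule.isClosed_topologicalClosure _)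
    (fun T hT _ hx => Commute.apply_mem_topologicalClosure_range (hF T hT) hx) with h | h
  · left
    ext x
    simpa [h] using F.range.le_topologicalClosure ⟨x, rfl⟩
  · right
    have hker : F.range.topologicalClosure ≤ G.ker :=
      Submodule.topologicalClosure_minimal _ (by rintro _ ⟨x, rfl⟩; exact congr($hGF x))
        G.isClosed_ker
    ext x
    exact hker (h ▸ Submodule.mem_top)

end Dichotomy

section Schur

variable {E : Type*} [NormedAddCommGroup E] [InnerProductSpace ℂ E] [CompleteSpace E]

theorem CommutantActsIrreducibly.spectrum_subset_Iic_or_Ici {B : E →L[ℂ] E}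
    (hirr : CommutantActsIrreducibly B) (hB : IsSelfAdjoint B) (c : ℝ) :
    spectrum ℝ B ⊆ Set.Iic c ∨ spectrum ℝ B ⊆ Set.Ici c := by
  set f : ℝ → ℝ := fun t => max (t - c) 0
  set g : ℝ → ℝ := fun t => max (c - t) 0
  have hgf : cfc g B * cfc f B = 0 := by
    rw [← cfc_mul g f B, ← cfc_zero ℝ B]
    refine cfc_congr fun t _ => ?_
    rcases le_total t c with h | h <;> simp [f, g, h]
  rcases hirr.eq_zero_or_eq_zero (fun T hT => (hT.symm.cfc_real f).symm) hgf with h | h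
  · left
    intro t ht
    simpa [f] using (eqOn_of_cfc_eq_cfc (h.trans (cfc_zero ℝ B).symm)) ht
  · right
    intro t ht
    simpa [g] using (eqOn_of_cfc_eq_cfc (h.trans (cfc_zero ℝ B).symm)) ht

theorem CommutantActsIrreducibly.exists_eq_algebraMap {B : E →L[ℂ] E}
    (hirr : CommutantActsIrreducibly B) (hB : IsSelfAdjoint B) :
    ∃ a : ℝ, B = algebraMap ℝ (E →L[ℂ] E) a := by
  have hsub : (spectrum ℝ B).Subsingleton := by
    intro a ha b hb
    rcases hirr.spectrum_subset_Iic_or_Ici hB ((a + b) / 2) with h | h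
    · linarith [Set.mem_Iic.1 (h ha), Set.mem_Iic.1 (h hb)]
    · linarith [Set.mem_Ici.1 (h ha), Set.mem_Ici.1 (h hb)]
  obtain ⟨a, ha⟩ : ∃ a, spectrum ℝ B ⊆ {a} := by
    rcases hsub.eq_empty_or_singleton with h | ⟨a, h⟩
    · exact ⟨0, h ▸ Set.empty_subset _⟩
    · exact ⟨a, h.le⟩
  exact ⟨a, CFC.eq_algebraMap_of_spectrum_subset_singleton B a ha hB⟩

end Schur

theorem IsSelfAdjoint.exists_eq_smul_of_irreducible {E : Type*} [NormedAddCommGroup E]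
    [InnerProductSpace ℂ E] [CompleteSpace E] {U : Submodule ℂ E} (hU : IsClosed (U : Set E))
    {A : E →L[ℂ] E} (hA : IsSelfAdjoint A) (hAU : ∀ x ∈ U, A x ∈ U) (S : Set (E →L[ℂ] E))
    (hSU : ∀ T ∈ S, ∀ x ∈ U, T x ∈ U) (hSA : ∀ T ∈ S, Commute T A)
    (hirr : ∀ K : Submodule ℂ E, IsClosed (K : Set E) → K ≤ U →
      (∀ T ∈ S, ∀ x ∈ K, T x ∈ K) → K = ⊥ ∨ K = U) :
    ∃ c : ℝ, ∀ x ∈ U, A x = (c : ℂ) • x := by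
  have : CompleteSpace U := hU.completeSpace_coe
  have hB : IsSelfAdjoint (A.restrict hAU) :=
    ContinuousLinearMap.isSelfAdjoint_iff_isSymmetric.2
      ((ContinuousLinearMap.isSelfAdjoint_iff_isSymmetric.1 hA).restrict_invariant hAU)
  have hirrB : CommutantActsIrreducibly (A.restrict hAU) := by
    intro K hK hKinv
    have hclosed : IsClosed (K.map U.subtype : Set E) := by
      rw [Submodule.map_coe]
      exact hU.isClosedEmbedding_subtypeVal.isClosedMap _ hK
    have hinv : ∀ T ∈ S, ∀ x ∈ K.map U.subtype, T x ∈ K.map U.subtype := by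
      rintro T hT _ ⟨v, hv, rfl⟩
      have hcomm : Commute (T.restrict (hSU T hT)) (A.restrict hAU) := by
        ext w
        exact congr($((hSA T hT).eq) w)
      exact ⟨_, hKinv _ hcomm v hv, rfl⟩
    refine (hirr _ hclosed (Submodule.map_subtype_le U K) hinv).imp (fun h => ?_) (fun h => ?_)
    · exact Submodule.map_injective_of_injective U.injective_subtype
        (h.trans (Submodule.map_bot _).symm)
    · exact Submodule.map_injective_of_injective U.injective_subtype
        (h.trans (Submodule.map_subtype_top U).symm)
  obtain ⟨c, hc⟩ := hirrB.exists_eq_algebraMap hB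
  refine ⟨c, fun x hx => ?_⟩
  simpa [Algebra.algebraMap_eq_smul_one] using congr(($hc ⟨x, hx⟩ : E))

theorem antiunitary_commutes_selfAdjoint_iff_preserves_irreducibles_general
    {H : Type*} [NormedAddCommGroup H] [InnerProductSpace ℂ H] [CompleteSpace H]
    (M : VonNeumannAlgebra H) (hM : ∀ A ∈ M, ∀ B ∈ M, A * B = B * A)
    {ι : Type*} (V : ι → Submodule ℂ H)
    (hVclosed : ∀ i, IsClosed (V i : Set H))
    (hVdense : Dense ((⨆ i, V i : Submodule ℂ H) : Set H))
    (hVinv : ∀ T : H →L[ℂ] H, (∀ A ∈ M, T * A = A * T) → ∀ i, ∀ x ∈ V i, T x ∈ V i)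
    (hVirr : ∀ i, ∀ K : Submodule ℂ H, IsClosed (K : Set H) → K ≤ V i →
      (∀ T : H →L[ℂ] H, (∀ A ∈ M, T * A = A * T) → ∀ x ∈ K, T x ∈ K) →
      K = ⊥ ∨ K = V i)
    (J : H ≃ₗᵢ⋆[ℂ] H) :
    (∀ A ∈ M, IsSelfAdjoint A → ∀ x : H, J (A x) = A (J x)) ↔
    (∀ i, ∀ x ∈ V i, J x ∈ V i) := by
  constructor
  · intro hJ i x hx
    have : CompleteSpace (V i) := (hVclosed i).completeSpace_coe
    have hP : (V i).starProjection ∈ M := by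
      rw [VonNeumannAlgebra.IsStarProjection.mem_iff isStarProjection_starProjection,
        Submodule.range_starProjection]
      intro T hT y hy
      exact hVinv T (fun A hA => (VonNeumannAlgebra.mem_commutant_iff.1 hT A hA).symm) i y hy
    have hJx : J x = (V i).starProjection (J x) :=
      calc J x = J ((V i).starProjection x) := by rw [Submodule.starProjection_eq_self_iff.2 hx]
        _ = (V i).starProjection (J x) := hJ _ hP (isSelfAdjoint_starProjection _) x
    rw [hJx]
    exact (V i).starProjection_apply_mem _
  · intro hJV A hA hAsa
    have hAJ : ∀ i, ∀ x ∈ V i, J (A x) = A (J x) := by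
      intro i x hx
      obtain ⟨c, hc⟩ := hAsa.exists_eq_smul_of_irreducible (hVclosed i)
        (hVinv A (hM A hA) i) {T | ∀ A ∈ M, T * A = A * T} (fun T hT => hVinv T hT i)
        (fun T hT => hT A hA) (hVirr i)
      rw [hc x hx, hc _ (hJV i x hx), LinearIsometryEquiv.map_smulₛₗ, Complex.conj_ofReal]
    have hcomp : (J : H →SL[starRingEnd ℂ] H).comp A = A.comp (J : H →SL[starRingEnd ℂ] H) := by
      refine ContinuousLinearMap.ext_on (s := ⋃ i, (V i : Set H)) ?_ ?_
      · rwa [← Submodule.iSup_eq_span]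
      · intro x hx
        obtain ⟨i, hi⟩ := Set.mem_iUnion.1 hx
        exact hAJ i x hi
    exact fun x => congr($hcomp x)

/-- Let `M` be a commutative von Neumann algebra on a complex Hilbert space `H` with
commutant `M'` (operators commuting with every element of `M`), and let `(V i)_{i ∈ ι}`
be a family of pairwise orthogonal closed subspaces of `H` with dense algebraic span,
each invariant under every operator of `M'` and irreducible for `M'` (the only closed
`M'`-invariant subspaces of `V i` are `⊥` and `V i`). Then an antiunitary operator `J`
on `H` commutes with every selfadjoint element of `M` if and only if `J (V i) ⊆ V i`
for every `i`. -/
theorem antiunitary_commutes_selfAdjoint_iff_preserves_irreducibles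
    {H : Type*} [NormedAddCommGroup H] [InnerProductSpace ℂ H] [CompleteSpace H]
    (M : VonNeumannAlgebra H) (hM : ∀ A ∈ M, ∀ B ∈ M, A * B = B * A)
    {ι : Type*} (V : ι → Submodule ℂ H)
    (hVclosed : ∀ i, IsClosed (V i : Set H))
    (hVorth : ∀ i j, i ≠ j → ∀ x ∈ V i, ∀ y ∈ V j, (inner ℂ x y : ℂ) = 0)
    (hVdense : Dense ((⨆ i, V i : Submodule ℂ H) : Set H))
    (hVinv : ∀ T : H →L[ℂ] H, (∀ A ∈ M, T * A = A * T) → ∀ i, ∀ x ∈ V i, T x ∈ V i)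
    (hVirr : ∀ i, ∀ K : Submodule ℂ H, IsClosed (K : Set H) → K ≤ V i →
      (∀ T : H →L[ℂ] H, (∀ A ∈ M, T * A = A * T) → ∀ x ∈ K, T x ∈ K) →
      K = ⊥ ∨ K = V i)
    (J : H ≃ₗᵢ⋆[ℂ] H) :
    (∀ A ∈ M, IsSelfAdjoint A → ∀ x : H, J (A x) = A (J x)) ↔
    (∀ i, ∀ x ∈ V i, J x ∈ V i) :=
  antiunitary_commutes_selfAdjoint_iff_preserves_irreducibles_general M hM V hVclosed hVdense hVinv
    hVirr J
end

section
/- Let H be a group, σ : H → H a group automorphism, V a complex Hilbert space, and ρ : H → B(V) a unitary representation. Let ψ be an antiunitary operator on V satisfying ρ(σ(h)) ∘ ψ = ψ ∘ ρ(h) for all h ∈ H. Let K¹ ⊆ H be a subgroup with σ(K¹) = K¹ such that: (i) the commutant ρ(K¹)' = {T ∈ B(V) : Tρ(k) = ρ(k)T for all k ∈ K¹} is commutative; (ii) there is a family (V_i)_{i∈I} of pairwise orthogonal closed subspaces of V with dense algebraic span, each invariant under ρ(k) for all k ∈ K¹, and such that for each i the only closed subspaces of V_i invariant under all ρ(k),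 k ∈ K¹, are {0} and V_i; (iii) for each i ∈ I there is an antiunitary operator ψ_i on V_i satisfying ρ(σ(k))|_{V_i} ∘ ψ_i = ψ_i ∘ ρ(k)|_{V_i} for all k ∈ K¹. Then ψ commutes with every selfadjoint element of ρ(K¹)'. -/
/-!
Fix a component `W i` with orthogonal projection `P`. Since `ρ` is unitary, both `W i` and its
orthogonal complement are `ρ(K)`-invariant, so `P` lies in the commutant; the commutant being
commutative, `T` preserves `W i`. By irreducibility, the commutant of `ρ(K)|_{W i}` has no zero
divisors, and a selfadjoint operator whose continuous functional calculus has no zero divisors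
has one-point spectrum, so `T` acts on `W i` as a real scalar `c`. The operator
`B = ψ ∘ ψᵢ⁻¹ ∘ P` is complex linear and commutes with `ρ(K)`, because `ψ` and `ψᵢ` twist `ρ` by
the same `σ`; hence `T B = B T`, and on `W i`, where `ψ = B ∘ ψᵢ`, this reads
`ψ T = c ψ = T ψ`. The `W i` span a dense subspace, so `ψ T = T ψ` everywhere.
-/

open Module.End

theorem IsSelfAdjoint.exists_eq_algebraMap_of_cfc_mul_eq_zero {A : Type*} [Ring A] [StarRing A]
    [Algebra ℝ A] [TopologicalSpace A] [ContinuousFunctionalCalculus ℝ A IsSelfAdjoint]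
    [Nontrivial A] {a : A} (ha : IsSelfAdjoint a)
    (h : ∀ f g : ℝ → ℝ, Continuous f → Continuous g →
      cfc f a * cfc g a = 0 → cfc f a = 0 ∨ cfc g a = 0) :
    ∃ r : ℝ, a = algebraMap ℝ A r := by
  have hvanish : ∀ f : ℝ → ℝ, Continuous f → cfc f a = 0 → ∀ x ∈ spectrum ℝ a, f x = 0 :=
    fun f hf hfa => eqOn_of_cfc_eq_cfc (hfa.trans (cfc_zero ℝ a).symm)
  have hlt : ∀ x ∈ spectrum ℝ a, ∀ y ∈ spectrum ℝ a, ¬ x < y := by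
    intro x hx y hy hxy
    obtain ⟨c, hxc, hcy⟩ := exists_between hxy
    have hf : Continuous fun t : ℝ => max 0 (c - t) := by fun_prop
    have hg : Continuous fun t : ℝ => max 0 (t - c) := by fun_prop
    have hfg : cfc (fun t => max 0 (c - t)) a * cfc (fun t => max 0 (t - c)) a = 0 := by
      rw [← cfc_mul _ _ a, ← cfc_zero ℝ a]
      refine cfc_congr fun t _ => ?_
      rcases le_total t c with htc | htc <;> simp [htc]
    rcases h _ _ hf hg hfg with h0 | h0
    · linarith [le_max_right (0 : ℝ) (c - x), hvanish _ hf h0 x hx]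
    · linarith [le_max_right (0 : ℝ) (y - c), hvanish _ hg h0 y hy]
  obtain ⟨r, hr⟩ := ContinuousFunctionalCalculus.spectrum_nonempty (R := ℝ) a ha
  refine ⟨r, CFC.eq_algebraMap_of_spectrum_subset_singleton a r fun x hx => ?_⟩
  exact le_antisymm (not_lt.mp (hlt r hr x hx)) (not_lt.mp (hlt x hx r hr))

def IsTopologicallyIrreducible {𝕜 E κ : Type*} [Semiring 𝕜] [AddCommMonoid E] [Module 𝕜 E]
    [TopologicalSpace E] (r : κ → E →L[𝕜] E) : Prop :=
  ∀ L : Submodule 𝕜 E, IsClosed (L : Set E) → (∀ k, ∀ x ∈ L, r k x ∈ L) → L = ⊥ ∨ L = ⊤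

theorem isTopologicallyIrreducible_restrict {𝕜 E κ : Type*} [Ring 𝕜] [AddCommGroup E] [Module 𝕜 E]
    [TopologicalSpace E] {W : Submodule 𝕜 E} (hW : IsClosed (W : Set E)) {r : κ → E →L[𝕜] E}
    (hrW : ∀ k, ∀ x ∈ W, r k x ∈ W)
    (hirr : ∀ L : Submodule 𝕜 E, IsClosed (L : Set E) → L ≤ W → (∀ k, ∀ x ∈ L, r k x ∈ L) →
      L = ⊥ ∨ L = W) :
    IsTopologicallyIrreducible fun k => (r k).restrict (hrW k) := by
  intro L hL hLr
  have hmap := hirr (L.map W.subtype) (hW.isClosedEmbedding_subtypeVal.isClosedMap _ hL)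
    (Submodule.map_subtype_le W L) (by rintro k _ ⟨x, hx, rfl⟩; exact ⟨_, hLr k x hx, rfl⟩)
  have hinj := Submodule.map_injective_of_injective W.injective_subtype
  exact hmap.imp (fun h => hinj (h.trans (Submodule.map_bot _).symm))
    (fun h => hinj (h.trans (Submodule.map_subtype_top W).symm))

namespace IsTopologicallyIrreducible

variable {κ : Type*}

theorem eq_zero_or_eq_zero_of_mul_eq_zero {𝕜 E : Type*} [NormedField 𝕜] [NormedAddCommGroup E]
    [NormedSpace 𝕜 E] {r : κ → E →L[𝕜] E} (hr : IsTopologicallyIrreducible r)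
    {F G : E →L[𝕜] E} (hG : ∀ k, Commute G (r k)) (hFG : F * G = 0) : F = 0 ∨ G = 0 := by
  set L := (LinearMap.range (G : E →ₗ[𝕜] E)).topologicalClosure
  have hL : ∀ k, ∀ x ∈ L, r k x ∈ L := by
    refine fun k => Submodule.topologicalClosure_mem_invtSubmodule (f := r k) ?_
    rintro _ ⟨x, rfl⟩
    exact ⟨r k x, congr($((hG k).eq) x)⟩
  rcases hr L (Submodule.isClosed_topologicalClosure _) hL with hbot | htop
  · right
    ext x
    have : G x ∈ L := Submodule.le_topologicalClosure _ (LinearMap.mem_range_self _ x)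
    simpa [hbot] using this
  · left
    have hker : L ≤ LinearMap.ker (F : E →ₗ[𝕜] E) := by
      refine Submodule.topologicalClosure_minimal _ ?_ F.isClosed_ker
      rintro _ ⟨x, rfl⟩
      exact congr($hFG x)
    ext x
    simpa using hker (htop ▸ Submodule.mem_top : x ∈ L)

theorem exists_eq_algebraMap_of_isSelfAdjoint {E : Type*} [NormedAddCommGroup E]
    [InnerProductSpace ℂ E] [CompleteSpace E] [Nontrivial E] {r : κ → E →L[ℂ] E}
    (hr : IsTopologicallyIrreducible r) {A : E →L[ℂ] E} (hA : IsSelfAdjoint A)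
    (hAr : ∀ k, Commute A (r k)) : ∃ c : ℝ, A = algebraMap ℝ (E →L[ℂ] E) c :=
  hA.exists_eq_algebraMap_of_cfc_mul_eq_zero fun _ g _ _ =>
    hr.eq_zero_or_eq_zero_of_mul_eq_zero fun k => (hAr k).cfc_real g

end IsTopologicallyIrreducible

namespace Submodule

variable {𝕜 E : Type*} [RCLike 𝕜] [NormedAddCommGroup E] [InnerProductSpace 𝕜 E]
  {U : Submodule 𝕜 E} [U.HasOrthogonalProjection] {T : E →L[𝕜] E}

theorem commute_starProjection_of_mem_invtSubmodule [CompleteSpace E] (h : U ∈ invtSubmodule T)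
    (h' : U ∈ invtSubmodule T.adjoint) : Commute U.starProjection T :=
  (ContinuousLinearMap.IsIdempotentElem.commute_iff U.isIdempotentElem_starProjection).mpr
    ⟨by rwa [range_starProjection], by
      rw [ker_starProjection]; exact ContinuousLinearMap.orthogonal_mem_invtSubmodule h'⟩

theorem mem_invtSubmodule_of_commute_starProjection (h : Commute U.starProjection T) :
    U ∈ invtSubmodule T := by
  simpa using
    ((ContinuousLinearMap.IsIdempotentElem.commute_iff U.isIdempotentElem_starProjection).mp h).1

end Submodule

theorem IsSelfAdjoint.restrict {𝕜 E : Type*} [RCLike 𝕜] [NormedAddCommGroup E]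
    [InnerProductSpace 𝕜 E] [CompleteSpace E] {T : E →L[𝕜] E} (hT : IsSelfAdjoint T)
    {U : Submodule 𝕜 E} [CompleteSpace U] (hU : ∀ x ∈ U, T x ∈ U) :
    IsSelfAdjoint (T.restrict hU) :=
  ContinuousLinearMap.isSelfAdjoint_iff_isSymmetric.mpr fun x y => hT.isSymmetric x y

theorem apply_comm_of_forall_eq_real_smul {V : Type*} [NormedAddCommGroup V] [InnerProductSpace ℂ V]
    {W : Submodule ℂ V} (ψ : V ≃ₗᵢ⋆[ℂ] V) {T B : V →L[ℂ] V} (hTB : T * B = B * T) {c : ℝ}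
    (hT : ∀ x ∈ W, T x = (c : ℂ) • x) (φ : W → W) (hφ : ∀ x : W, B (φ x) = ψ x) :
    ∀ x ∈ W, ψ (T x) = T (ψ x) := by
  intro x hx
  have hψx : ψ x = B (φ ⟨x, hx⟩) := (hφ ⟨x, hx⟩).symm
  calc ψ (T x) = (c : ℂ) • ψ x := by rw [hT x hx, map_smulₛₗ, Complex.conj_ofReal]
    _ = B (T (φ ⟨x, hx⟩)) := by rw [hT _ (φ _).2, map_smul, hψx]
    _ = T (ψ x) := by rw [hψx]; exact congr($hTB _).symm

section UnitaryRepresentation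

variable {H V : Type*} [Group H] [NormedAddCommGroup V] [InnerProductSpace ℂ V] [CompleteSpace V]
  {ρ : H →* (V →L[ℂ] V)} {K : Subgroup H} {W : Submodule ℂ V}

theorem adjoint_map_eq_map_inv (hρ : ∀ h, ρ h ∈ unitary (V →L[ℂ] V)) (h : H) :
    (ρ h).adjoint = ρ h⁻¹ :=
  left_inv_eq_right_inv (hρ h).1 (by rw [← map_mul, mul_inv_cancel, map_one])

theorem commute_starProjection_map (hρ : ∀ h, ρ h ∈ unitary (V →L[ℂ] V))
    [W.HasOrthogonalProjection] (hW : ∀ k ∈ K, ∀ x ∈ W, ρ k x ∈ W) {k : H} (hk : k ∈ K) :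
    Commute W.starProjection (ρ k) :=
  W.commute_starProjection_of_mem_invtSubmodule (hW k hk)
    (by rw [adjoint_map_eq_map_inv hρ]; exact hW _ (K.inv_mem hk))

theorem exists_forall_mem_apply_eq_smul (hWclosed : IsClosed (W : Set V))
    (hWinv : ∀ k ∈ K, ∀ x ∈ W, ρ k x ∈ W)
    (hWirr : ∀ L : Submodule ℂ V, IsClosed (L : Set V) → L ≤ W →
      (∀ k ∈ K, ∀ x ∈ L, ρ k x ∈ L) → L = ⊥ ∨ L = W)
    {T : V →L[ℂ] V} (hT : ∀ k ∈ K, T * ρ k = ρ k * T)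
    (hTsa : IsSelfAdjoint T) (hTW : ∀ x ∈ W, T x ∈ W) :
    ∃ c : ℝ, ∀ x ∈ W, T x = (c : ℂ) • x := by
  have := hWclosed.completeSpace_coe
  rcases subsingleton_or_nontrivial W with _ | _
  · refine ⟨0, fun x hx => ?_⟩
    obtain rfl : x = 0 := congr_arg Subtype.val (Subsingleton.elim (⟨x, hx⟩ : W) 0)
    simp
  set r : K → W →L[ℂ] W := fun k => (ρ k).restrict (hWinv k k.2)
  have hr : IsTopologicallyIrreducible r :=
    isTopologicallyIrreducible_restrict hWclosed _
      fun L hL hLW hLr => hWirr L hL hLW fun k hk => hLr ⟨k, hk⟩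
  have hTr : ∀ k, Commute (T.restrict hTW) (r k) := fun k => by
    ext x
    exact congr($(hT k k.2) x)
  obtain ⟨c, hc⟩ := hr.exists_eq_algebraMap_of_isSelfAdjoint (hTsa.restrict hTW) hTr
  refine ⟨c, fun x hx => ?_⟩
  have := congr(($hc ⟨x, hx⟩ : V))
  rw [Algebra.algebraMap_eq_smul_one] at this
  rw [Complex.coe_smul]
  exact this

theorem exists_commute_eq_comp_symm {σ : H ≃* H} (hρ : ∀ h, ρ h ∈ unitary (V →L[ℂ] V))
    (ψ : V ≃ₗᵢ⋆[ℂ] V) (hψ : ∀ (h : H) (x : V), ρ (σ h) (ψ x) = ψ (ρ h x))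
    (hK : Subgroup.map σ.toMonoidHom K = K) [W.HasOrthogonalProjection]
    (hWinv : ∀ k ∈ K, ∀ x ∈ W, ρ k x ∈ W) (φ : W ≃ₗᵢ⋆[ℂ] W)
    (hφ : ∀ k ∈ K, ∀ x y : W, (y : V) = ρ k (x : V) → ((φ y : W) : V) = ρ (σ k) ((φ x : W) : V)) :
    ∃ B : V →L[ℂ] V, (∀ k ∈ K, B * ρ k = ρ k * B) ∧ ∀ x : W, B (φ x) = ψ x := by
  refine ⟨(ψ.toContinuousLinearEquiv : V →SL[starRingEnd ℂ] V).comp (W.subtypeL.comp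
    ((φ.symm.toContinuousLinearEquiv : W →SL[starRingEnd ℂ] W).comp W.orthogonalProjectionOnto)),
    fun k hk => ?_, fun x => by simp⟩
  obtain ⟨k, hk', rfl⟩ : k ∈ K.map σ.toMonoidHom := hK.symm ▸ hk
  have hσk : σ k ∈ K := hk
  have hP : ∀ v, W.orthogonalProjectionOnto (ρ (σ k) v) =
      (ρ (σ k)).restrict (hWinv _ hσk) (W.orthogonalProjectionOnto v) := fun v =>
    Subtype.ext congr($((commute_starProjection_map hρ hWinv hσk).eq) v)
  have hφ' : ∀ w : W, φ.symm ((ρ (σ k)).restrict (hWinv _ hσk) w) =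
      (ρ k).restrict (hWinv _ hk') (φ.symm w) := fun w =>
    φ.injective <| Subtype.ext <| by
      rw [φ.apply_symm_apply, hφ k hk' (φ.symm w) _ rfl, φ.apply_symm_apply]
      rfl
  ext v
  simp [hP, hφ', hψ]

end UnitaryRepresentation

theorem antiunitary_commutes_commutant_selfAdjoint_of_discrete_decomposition_general
    {H : Type*} [Group H] {V : Type*} [NormedAddCommGroup V] [InnerProductSpace ℂ V]
    [CompleteSpace V]
    (σ : H ≃* H)
    (ρ : H →* (V →L[ℂ] V)) (hρ : ∀ h, ρ h ∈ unitary (V →L[ℂ] V))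
    (ψ : V ≃ₗᵢ⋆[ℂ] V) (hψ : ∀ (h : H) (x : V), ρ (σ h) (ψ x) = ψ (ρ h x))
    (K : Subgroup H) (hK : Subgroup.map σ.toMonoidHom K = K)
    (hcomm : ∀ T S : V →L[ℂ] V, (∀ k ∈ K, T * ρ k = ρ k * T) →
      (∀ k ∈ K, S * ρ k = ρ k * S) → T * S = S * T)
    {ι : Type*} (W : ι → Submodule ℂ V)
    (hWclosed : ∀ i, IsClosed (W i : Set V))
    (hWdense : Dense ((⨆ i, W i : Submodule ℂ V) : Set V))
    (hWinv : ∀ i, ∀ k ∈ K, ∀ x ∈ W i, ρ k x ∈ W i)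
    (hWirr : ∀ i, ∀ L : Submodule ℂ V, IsClosed (L : Set V) → L ≤ W i →
      (∀ k ∈ K, ∀ x ∈ L, ρ k x ∈ L) → L = ⊥ ∨ L = W i)
    (ψi : ∀ i, (W i) ≃ₗᵢ⋆[ℂ] (W i))
    (hψi : ∀ i, ∀ k ∈ K, ∀ x y : W i, (y : V) = ρ k (x : V) →
      ((ψi i y : W i) : V) = ρ (σ k) ((ψi i x : W i) : V)) :
    ∀ T : V →L[ℂ] V, (∀ k ∈ K, T * ρ k = ρ k * T) → IsSelfAdjoint T →
      ∀ x : V, ψ (T x) = T (ψ x) := by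
  intro T hT hTsa
  have hcomponent : ∀ i, ∀ x ∈ W i, ψ (T x) = T (ψ x) := by
    intro i
    have : CompleteSpace (W i) := (hWclosed i).completeSpace_coe
    have hTW : ∀ x ∈ W i, T x ∈ W i := (W i).mem_invtSubmodule_of_commute_starProjection
      (hcomm T _ hT fun k hk => (commute_starProjection_map hρ (hWinv i) hk).eq).symm
    obtain ⟨c, hc⟩ :=
      exists_forall_mem_apply_eq_smul (hWclosed i) (hWinv i) (hWirr i) hT hTsa hTW
    obtain ⟨B, hB, hBψ⟩ := exists_commute_eq_comp_symm hρ ψ hψ hK (hWinv i) (ψi i) (hψi i)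
    exact apply_comm_of_forall_eq_real_smul ψ (hcomm T B hT hB) hc (ψi i) hBψ
  have hspan : Dense (Submodule.span ℂ (⋃ i, (W i : Set V)) : Set V) :=
    Submodule.iSup_eq_span W ▸ hWdense
  have hext := ContinuousLinearMap.ext_on hspan
    (f := (ψ.toContinuousLinearEquiv : V →SL[starRingEnd ℂ] V).comp T)
    (g := T.comp (ψ.toContinuousLinearEquiv : V →SL[starRingEnd ℂ] V))
    (Set.iUnion_subset fun i x hx => hcomponent i x hx)
  exact fun x => congr($hext x)

/-- Let `ρ : H → B(V)` be a unitary representation of a group `H` on a complex Hilbert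
space `V`, `σ` an automorphism of `H`, and `ψ` an antiunitary operator on `V` with
`ρ(σ h) ∘ ψ = ψ ∘ ρ h` for all `h`. Let `K ≤ H` be a `σ`-invariant subgroup such that:
(i) the commutant of `ρ(K)` is commutative; (ii) there is a family `(W i)` of pairwise
orthogonal closed subspaces with dense algebraic span, each `ρ(K)`-invariant and
`ρ(K)`-irreducible; (iii) each `W i` carries an antiunitary `ψᵢ` intertwining
`ρ k |_{W i}` with `ρ (σ k) |_{W i}`. Then `ψ` commutes with every selfadjoint element
of the commutant `ρ(K)'`. -/
theorem antiunitary_commutes_commutant_selfAdjoint_of_discrete_decomposition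
    {H : Type*} [Group H] {V : Type*} [NormedAddCommGroup V] [InnerProductSpace ℂ V]
    [CompleteSpace V]
    (σ : H ≃* H)
    (ρ : H →* (V →L[ℂ] V)) (hρ : ∀ h, ρ h ∈ unitary (V →L[ℂ] V))
    (ψ : V ≃ₗᵢ⋆[ℂ] V) (hψ : ∀ (h : H) (x : V), ρ (σ h) (ψ x) = ψ (ρ h x))
    (K : Subgroup H) (hK : Subgroup.map σ.toMonoidHom K = K)
    (hcomm : ∀ T S : V →L[ℂ] V, (∀ k ∈ K, T * ρ k = ρ k * T) →
      (∀ k ∈ K, S * ρ k = ρ k * S) → T * S = S * T)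
    {ι : Type*} (W : ι → Submodule ℂ V)
    (hWclosed : ∀ i, IsClosed (W i : Set V))
    (hWorth : ∀ i j, i ≠ j → ∀ x ∈ W i, ∀ y ∈ W j, (inner ℂ x y : ℂ) = 0)
    (hWdense : Dense ((⨆ i, W i : Submodule ℂ V) : Set V))
    (hWinv : ∀ i, ∀ k ∈ K, ∀ x ∈ W i, ρ k x ∈ W i)
    (hWirr : ∀ i, ∀ L : Submodule ℂ V, IsClosed (L : Set V) → L ≤ W i →
      (∀ k ∈ K, ∀ x ∈ L, ρ k x ∈ L) → L = ⊥ ∨ L = W i)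
    (ψi : ∀ i, (W i) ≃ₗᵢ⋆[ℂ] (W i))
    (hψi : ∀ i, ∀ k ∈ K, ∀ x y : W i, (y : V) = ρ k (x : V) →
      ((ψi i y : W i) : V) = ρ (σ k) ((ψi i x : W i) : V)) :
    ∀ T : V →L[ℂ] V, (∀ k ∈ K, T * ρ k = ρ k * T) → IsSelfAdjoint T →
      ∀ x : V, ψ (T x) = T (ψ x) :=
  antiunitary_commutes_commutant_selfAdjoint_of_discrete_decomposition_general σ ρ hρ ψ hψ K hK
    hcomm W hWclosed hWdense hWinv hWirr ψi hψi
end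

section
/- Let G be a topological group with subgroups K, B and H. Then the following conditions are equivalent: (1) the set KBH = {kbh : k ∈ K, b ∈ B, h ∈ H} is dense in G; (2) the set HBK = {hbk : h ∈ H, b ∈ B, k ∈ K} is dense in G; (3) the set {(g b₁ k, g b₂ h) : g ∈ G, b₁, b₂ ∈ B, k ∈ K, h ∈ H} is dense in the product topological group G × G. -/
/-!
Inversion maps `KBH` onto `HBK`, and `(x, y) ↦ x⁻¹ y` maps `G × G` onto `G` with preimage of `KBH`
exactly the set in (3). Both maps are open, continuous and surjective, so density transfers in
both directions.
-/

open Pointwise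

section Sets

variable {G : Type*}

lemma setOf_eq_mul_mul [Mul G] (S T U : Set G) :
    {x : G | ∃ s ∈ S, ∃ t ∈ T, ∃ u ∈ U, x = s * t * u} = S * T * U := by
  ext x
  simp only [Set.mem_ofPred_eq, Set.mem_mul]
  constructor
  · rintro ⟨s, hs, t, ht, u, hu, rfl⟩
    exact ⟨s * t, ⟨s, hs, t, ht, rfl⟩, u, hu, rfl⟩
  · rintro ⟨_, ⟨s, hs, t, ht, rfl⟩, u, hu, rfl⟩
    exact ⟨s, hs, t, ht, u, hu, rfl⟩

variable [Group G]

lemma inv_subgroup_mul_mul (K B H : Subgroup G) :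
    ((K : Set G) * B * H)⁻¹ = H * B * K := by
  simp only [mul_inv_rev, inv_coe_set, mul_assoc]

lemma exists_pair_mul_mul_eq_iff_inv_mul_mem (K B H : Subgroup G) (x y : G) :
    (∃ g : G, ∃ b₁ ∈ B, ∃ b₂ ∈ B, ∃ k ∈ K, ∃ h ∈ H, (x, y) = (g * b₁ * k, g * b₂ * h)) ↔
      x⁻¹ * y ∈ (K : Set G) * B * H := by
  rw [← setOf_eq_mul_mul, Set.mem_ofPred_eq]
  constructor
  · rintro ⟨g, b₁, hb₁, b₂, hb₂, k, hk, h, hh, hxy⟩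
    obtain ⟨rfl, rfl⟩ := Prod.mk.inj hxy
    exact ⟨k⁻¹, K.inv_mem hk, b₁⁻¹ * b₂, B.mul_mem (B.inv_mem hb₁) hb₂, h, hh, by group⟩
  · rintro ⟨k, hk, b, hb, h, hh, hxy⟩
    refine ⟨x * k, 1, B.one_mem, b, hb, k⁻¹, K.inv_mem hk, h, hh, ?_⟩
    rw [inv_mul_eq_iff_eq_mul] at hxy
    subst hxy
    ext <;> group

end Sets

lemma dense_inv_iff {G : Type*} [InvolutiveInv G] [TopologicalSpace G] [ContinuousInv G]
    {s : Set G} : Dense s⁻¹ ↔ Dense s :=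
  (Homeomorph.inv G).isOpenQuotientMap.dense_preimage_iff

section Topology

variable {G : Type*} [Group G] [TopologicalSpace G] [IsTopologicalGroup G]

lemma isOpenQuotientMap_inv_mul : IsOpenQuotientMap fun p : G × G => p.1⁻¹ * p.2 :=
  isOpenQuotientMap_snd.comp (Homeomorph.shearMulRight G).symm.isOpenQuotientMap

lemma dense_setOf_inv_mul_mem_iff {s : Set G} :
    Dense {p : G × G | p.1⁻¹ * p.2 ∈ s} ↔ Dense s :=
  isOpenQuotientMap_inv_mul.dense_preimage_iff

end Topology

/-- Let `G` be a topological group with subgroups `K`, `B`, `H`. Then the following are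
equivalent: (1) `KBH` is dense in `G`; (2) `HBK` is dense in `G`; (3) the set
`{(g b₁ k, g b₂ h)}` is dense in `G × G`. -/
theorem dense_KBH_iff_dense_HBK_iff_dense_diag
    {G : Type*} [Group G] [TopologicalSpace G] [IsTopologicalGroup G]
    (K B H : Subgroup G) :
    ((Dense {x : G | ∃ k ∈ K, ∃ b ∈ B, ∃ h ∈ H, x = k * b * h} ↔
      Dense {x : G | ∃ h ∈ H, ∃ b ∈ B, ∃ k ∈ K, x = h * b * k}) ∧
     (Dense {x : G | ∃ k ∈ K, ∃ b ∈ B, ∃ h ∈ H, x = k * b * h} ↔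
      Dense {p : G × G | ∃ g : G, ∃ b₁ ∈ B, ∃ b₂ ∈ B, ∃ k ∈ K, ∃ h ∈ H,
        p = (g * b₁ * k, g * b₂ * h)})) := by
  have hdiag : {p : G × G | ∃ g : G, ∃ b₁ ∈ B, ∃ b₂ ∈ B, ∃ k ∈ K, ∃ h ∈ H,
      p = (g * b₁ * k, g * b₂ * h)} = {p | p.1⁻¹ * p.2 ∈ (K : Set G) * B * H} :=
    Set.ext fun ⟨x, y⟩ => exists_pair_mul_mul_eq_iff_inv_mul_mem K B H x y
  rw [hdiag, dense_setOf_inv_mul_mem_iff]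
  simp only [← SetLike.mem_coe, setOf_eq_mul_mul, ← inv_subgroup_mul_mul K B H, dense_inv_iff,
    and_self]
end
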